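/- Suppose P∞ = (P∞(1),…,P∞(L)) is a family of symmetric n×n real matrices with N(P∞,i) invertible for each i, solving the coupled algebraic Riccati equations M(P∞,i) − L(P∞,i) N(P∞,i)⁻¹ L(P∞,i)ᵀ = 0 for all i, and suppose P_T : [0,T] → (symmetric n×n real matrices)^L is differentiable with N(P_T(t),i) invertible for all t and i and satisfies the coupled differential Riccati equations Ṗ_T(t,i) + M(P_T(t),i) − L(P_T(t),i) N(P_T(t),i)⁻¹ L(P_T(t),i)ᵀ = 0 on [0,T]. Define Θ(i) = −N(P∞,i)⁻¹ L(P∞,i)ᵀ, Θ_T(t,i) = −N(P_T(t),i)⁻¹ L(P_T(t),i)ᵀ, and Σ(t,i) = P∞(i) − P_T(t,i). Then for every t ∈ [0,T] and every i, the derivative of Σ satisfies Σ̇(t,i) = −Σ(t,i)[A(i)+B(i)Θ(i)] − [A(i)+B(i)Θ(i)]ᵀΣ(t,i) − Σ_{j=1}^{L} π_{ij} Σ(t,j) − [C(i)+D(i)Θ(i)]ᵀ Σ(t,i) [C(i)+D(i)Θ(i)] − [Θ(i)−Θ_T(t,i)]ᵀ N(P_T(t),i) [Θ(i)−Θ_T(t,i)].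 -/

import Mathlib

/-!
For a fixed gain `K`, `H(P,K) = M(P) + L(P)K + KᵀL(P)ᵀ + KᵀN(P)K` is affine in `P`, its linear
part being the Lyapunov operator of the closed loop `A + BK`, `C + DK`, `π`. Completing the
square gives `M(P) - L N⁻¹ Lᵀ = H(P,K) - (K - Θ_P)ᵀ N(P) (K - Θ_P)` with `Θ_P = -N(P)⁻¹L(P)ᵀ`.
With `K = Θ`, the algebraic equation says `H(P∞,Θ) = 0` and the differential one says
`Ṗ_T = -H(P_T,Θ) + (Θ - Θ_T)ᵀ N(P_T) (Θ - Θ_T)`; subtract them and use `Σ̇ = -Ṗ_T`.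
-/

open Matrix

/-- The map `P ↦ M(P,i)` of the coupled Riccati equations. -/
noncomputable def calM {n L : ℕ}
    (A C Q : Fin L → Matrix (Fin n) (Fin n) ℝ)
    (pi : Matrix (Fin L) (Fin L) ℝ)
    (P : Fin L → Matrix (Fin n) (Fin n) ℝ) (i : Fin L) : Matrix (Fin n) (Fin n) ℝ :=
  P i * A i + (A i)ᵀ * P i + (C i)ᵀ * P i * C i + Q i + ∑ j, pi i j • P j

/-- The map `P ↦ L(P,i)` of the coupled Riccati equations. -/
noncomputable def calL {n m L : ℕ}
    (B D : Fin L → Matrix (Fin n) (Fin m) ℝ)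
    (C : Fin L → Matrix (Fin n) (Fin n) ℝ)
    (S : Fin L → Matrix (Fin m) (Fin n) ℝ)
    (P : Fin L → Matrix (Fin n) (Fin n) ℝ) (i : Fin L) : Matrix (Fin n) (Fin m) ℝ :=
  P i * B i + (C i)ᵀ * P i * D i + (S i)ᵀ

/-- The map `P ↦ N(P,i)` of the coupled Riccati equations. -/
noncomputable def calN {n m L : ℕ}
    (D : Fin L → Matrix (Fin n) (Fin m) ℝ)
    (R : Fin L → Matrix (Fin m) (Fin m) ℝ)
    (P : Fin L → Matrix (Fin n) (Fin n) ℝ) (i : Fin L) : Matrix (Fin m) (Fin m) ℝ :=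
  (D i)ᵀ * P i * D i + R i


theorem Matrix.transpose_sub_mul_mul_sub_eq_of_eq_neg_inv_mul_transpose
    {ι κ α : Type*} [Fintype ι] [Fintype κ] [DecidableEq κ] [CommRing α]
    {N : Matrix κ κ α} {G : Matrix ι κ α} {K Θ : Matrix κ ι α}
    (hN : N.IsSymm) (hNu : IsUnit N) (hΘ : Θ = -(N⁻¹ * Gᵀ)) :
    (K - Θ)ᵀ * N * (K - Θ) = Kᵀ * N * K + G * K + Kᵀ * Gᵀ + G * N⁻¹ * Gᵀ := by
  have hNΘ : N * Θ = -Gᵀ := by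
    rw [hΘ, Matrix.mul_neg,
      Matrix.mul_nonsing_inv_cancel_left _ _ ((N.isUnit_iff_isUnit_det).mp hNu)]
  have hΘN : Θᵀ * N = -G := by
    simpa [Matrix.transpose_mul, hN.eq] using congrArg Matrix.transpose hNΘ
  have hΘNΘ : Θᵀ * N * Θ = G * N⁻¹ * Gᵀ := by
    rw [hΘN, hΘ, Matrix.neg_mul, Matrix.mul_neg, neg_neg, Matrix.mul_assoc]
  calc (K - Θ)ᵀ * N * (K - Θ) = Kᵀ * N * K - Kᵀ * (N * Θ) - Θᵀ * N * K + Θᵀ * N * Θ := by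
        simp only [Matrix.transpose_sub, Matrix.sub_mul, Matrix.mul_sub, Matrix.mul_assoc]
        abel
    _ = Kᵀ * N * K + G * K + Kᵀ * Gᵀ + G * N⁻¹ * Gᵀ := by
        rw [hΘNΘ, hNΘ, hΘN, Matrix.mul_neg, Matrix.neg_mul]
        abel

section Riccati

variable {n m L : ℕ}
    (A C Q : Fin L → Matrix (Fin n) (Fin n) ℝ) (B D : Fin L → Matrix (Fin n) (Fin m) ℝ)
    (S : Fin L → Matrix (Fin m) (Fin n) ℝ) (R : Fin L → Matrix (Fin m) (Fin m) ℝ)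
    (pi : Matrix (Fin L) (Fin L) ℝ)

noncomputable def riccatiHamiltonian (P : Fin L → Matrix (Fin n) (Fin n) ℝ) (i : Fin L)
    (K : Matrix (Fin m) (Fin n) ℝ) : Matrix (Fin n) (Fin n) ℝ :=
  calM A C Q pi P i + calL B D C S P i * K + Kᵀ * (calL B D C S P i)ᵀ + Kᵀ * calN D R P i * K

noncomputable def closedLoopLyapunov (X : Fin L → Matrix (Fin n) (Fin n) ℝ) (i : Fin L)
    (K : Matrix (Fin m) (Fin n) ℝ) : Matrix (Fin n) (Fin n) ℝ :=
  X i * (A i + B i * K) + (A i + B i * K)ᵀ * X i + ∑ j, pi i j • X j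
    + (C i + D i * K)ᵀ * X i * (C i + D i * K)

theorem calN_isSymm {P : Fin L → Matrix (Fin n) (Fin n) ℝ} {i : Fin L}
    (hP : (P i).IsSymm) (hR : (R i).IsSymm) : (calN D R P i).IsSymm := by
  simp [Matrix.IsSymm, calN, Matrix.transpose_mul, hP.eq, hR.eq, Matrix.mul_assoc]

theorem riccatiHamiltonian_sub {P₁ P₂ : Fin L → Matrix (Fin n) (Fin n) ℝ} {i : Fin L}
    (h₁ : (P₁ i).IsSymm) (h₂ : (P₂ i).IsSymm) (K : Matrix (Fin m) (Fin n) ℝ) :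
    riccatiHamiltonian A C Q B D S R pi P₁ i K - riccatiHamiltonian A C Q B D S R pi P₂ i K
      = closedLoopLyapunov A C B D pi (fun j => P₁ j - P₂ j) i K := by
  simp only [riccatiHamiltonian, closedLoopLyapunov, calM, calL, calN, Matrix.transpose_add,
    Matrix.transpose_mul, Matrix.transpose_transpose, h₁.eq, h₂.eq, Matrix.mul_add,
    Matrix.add_mul, Matrix.mul_sub, Matrix.sub_mul, Matrix.mul_assoc, smul_sub,
    Finset.sum_sub_distrib]
  abel

theorem riccati_residual_eq {P : Fin L → Matrix (Fin n) (Fin n) ℝ} {i : Fin L}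
    (hP : (P i).IsSymm) (hR : (R i).IsSymm) (hN : IsUnit (calN D R P i))
    {Θ : Matrix (Fin m) (Fin n) ℝ} (hΘ : Θ = -((calN D R P i)⁻¹ * (calL B D C S P i)ᵀ))
    (K : Matrix (Fin m) (Fin n) ℝ) :
    calM A C Q pi P i - calL B D C S P i * (calN D R P i)⁻¹ * (calL B D C S P i)ᵀ
      = riccatiHamiltonian A C Q B D S R pi P i K - (K - Θ)ᵀ * calN D R P i * (K - Θ) := by
  rw [Matrix.transpose_sub_mul_mul_sub_eq_of_eq_neg_inv_mul_transpose
    (calN_isSymm D R hP hR) hN hΘ, riccatiHamiltonian]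
  abel

end Riccati

theorem sigma_derivative_equation_general
    (n m L : ℕ)
    (T : ℝ)
    (A C : Fin L → Matrix (Fin n) (Fin n) ℝ)
    (B D : Fin L → Matrix (Fin n) (Fin m) ℝ)
    (Q : Fin L → Matrix (Fin n) (Fin n) ℝ)
    (S : Fin L → Matrix (Fin m) (Fin n) ℝ)
    (R : Fin L → Matrix (Fin m) (Fin m) ℝ) (hR : ∀ i, (R i).IsSymm)
    (pi : Matrix (Fin L) (Fin L) ℝ)
    -- the stationary solution of the CAREs
    (Pinf : Fin L → Matrix (Fin n) (Fin n) ℝ) (hPinfsymm : ∀ i, (Pinf i).IsSymm)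
    (hPinfinv : ∀ i, IsUnit (calN D R Pinf i))
    (hCARE : ∀ i,
      calM A C Q pi Pinf i
        - calL B D C S Pinf i * (calN D R Pinf i)⁻¹ * (calL B D C S Pinf i)ᵀ = 0)
    -- the solution of the CDREs and its derivative
    (P : ℝ → Fin L → Matrix (Fin n) (Fin n) ℝ)
    (P' : ℝ → Fin L → Matrix (Fin n) (Fin n) ℝ)
    (hPsymm : ∀ t ∈ Set.Icc (0 : ℝ) T, ∀ i, (P t i).IsSymm)
    (hPderiv : ∀ t ∈ Set.Icc (0 : ℝ) T, ∀ i, ∀ a b : Fin n,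
      HasDerivWithinAt (fun s => P s i a b) (P' t i a b) (Set.Icc (0 : ℝ) T) t)
    (hPinv : ∀ t ∈ Set.Icc (0 : ℝ) T, ∀ i, IsUnit (calN D R (P t) i))
    (hCDRE : ∀ t ∈ Set.Icc (0 : ℝ) T, ∀ i,
      P' t i + calM A C Q pi (P t) i
        - calL B D C S (P t) i * (calN D R (P t) i)⁻¹ * (calL B D C S (P t) i)ᵀ = 0)
    -- the feedback gains
    (Θ : Fin L → Matrix (Fin m) (Fin n) ℝ)
    (hΘ : ∀ i, Θ i = -((calN D R Pinf i)⁻¹ * (calL B D C S Pinf i)ᵀ))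
    (Θt : ℝ → Fin L → Matrix (Fin m) (Fin n) ℝ)
    (hΘt : ∀ t i, Θt t i = -((calN D R (P t) i)⁻¹ * (calL B D C S (P t) i)ᵀ)) :
    -- conclusion: the derivative of `Σ(t,i) = P∞(i) − P_T(t,i)` satisfies the stated
    -- Lyapunov-type equation
    ∀ t ∈ Set.Icc (0 : ℝ) T, ∀ i, ∀ a b : Fin n,
      HasDerivWithinAt (fun s => (Pinf i - P s i) a b)
        ((-((Pinf i - P t i) * (A i + B i * Θ i))
          - (A i + B i * Θ i)ᵀ * (Pinf i - P t i)
          - (∑ j, pi i j • (Pinf j - P t j))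
          - (C i + D i * Θ i)ᵀ * (Pinf i - P t i) * (C i + D i * Θ i)
          - (Θ i - Θt t i)ᵀ * calN D R (P t) i * (Θ i - Θt t i)) a b)
        (Set.Icc (0 : ℝ) T) t := by
  intro t ht i a b
  have hHinf : riccatiHamiltonian A C Q B D S R pi Pinf i (Θ i) = 0 := by
    have h := riccati_residual_eq A C Q B D S R pi (hPinfsymm i) (hR i) (hPinfinv i) (hΘ i) (Θ i)
    rwa [hCARE i, sub_self, Matrix.transpose_zero, Matrix.zero_mul, Matrix.mul_zero, sub_zero,
      eq_comm] at h
  have hHt : P' t i + (riccatiHamiltonian A C Q B D S R pi (P t) i (Θ i)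
      - (Θ i - Θt t i)ᵀ * calN D R (P t) i * (Θ i - Θt t i)) = 0 := by
    rw [← riccati_residual_eq A C Q B D S R pi (hPsymm t ht i) (hR i) (hPinv t ht i) (hΘt t i),
      ← add_sub_assoc]
    exact hCDRE t ht i
  have hdiff := riccatiHamiltonian_sub A C Q B D S R pi (hPinfsymm i) (hPsymm t ht i) (Θ i)
  rw [hHinf, zero_sub, neg_eq_iff_eq_neg, closedLoopLyapunov] at hdiff
  rw [hdiff] at hHt
  have hrate : -((Pinf i - P t i) * (A i + B i * Θ i))
        - (A i + B i * Θ i)ᵀ * (Pinf i - P t i)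
        - (∑ j, pi i j • (Pinf j - P t j))
        - (C i + D i * Θ i)ᵀ * (Pinf i - P t i) * (C i + D i * Θ i)
        - (Θ i - Θt t i)ᵀ * calN D R (P t) i * (Θ i - Θt t i) = -P' t i := by
    rw [eq_neg_iff_add_eq_zero, ← hHt]
    abel
  rw [hrate]
  exact (hPderiv t ht i a b).const_sub (Pinf i a b)

/-- The derivative equation satisfied by `Σ(t,i) = P∞(i) − P_T(t,i)`, where `P∞` solves the
coupled algebraic Riccati equations and `P_T` solves the coupled differential Riccati
equations. -/
theorem sigma_derivative_equation
    (n m L : ℕ) (hn : 0 < n) (hm : 0 < m) (hL : 0 < L)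
    (T : ℝ) (hT : 0 < T)
    (A C : Fin L → Matrix (Fin n) (Fin n) ℝ)
    (B D : Fin L → Matrix (Fin n) (Fin m) ℝ)
    (Q : Fin L → Matrix (Fin n) (Fin n) ℝ) (hQ : ∀ i, (Q i).IsSymm)
    (S : Fin L → Matrix (Fin m) (Fin n) ℝ)
    (R : Fin L → Matrix (Fin m) (Fin m) ℝ) (hR : ∀ i, (R i).IsSymm)
    (pi : Matrix (Fin L) (Fin L) ℝ)
    -- the stationary solution of the CAREs
    (Pinf : Fin L → Matrix (Fin n) (Fin n) ℝ) (hPinfsymm : ∀ i, (Pinf i).IsSymm)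
    (hPinfinv : ∀ i, IsUnit (calN D R Pinf i))
    (hCARE : ∀ i,
      calM A C Q pi Pinf i
        - calL B D C S Pinf i * (calN D R Pinf i)⁻¹ * (calL B D C S Pinf i)ᵀ = 0)
    -- the solution of the CDREs and its derivative
    (P : ℝ → Fin L → Matrix (Fin n) (Fin n) ℝ)
    (P' : ℝ → Fin L → Matrix (Fin n) (Fin n) ℝ)
    (hPsymm : ∀ t ∈ Set.Icc (0 : ℝ) T, ∀ i, (P t i).IsSymm)
    (hPderiv : ∀ t ∈ Set.Icc (0 : ℝ) T, ∀ i, ∀ a b : Fin n,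
      HasDerivWithinAt (fun s => P s i a b) (P' t i a b) (Set.Icc (0 : ℝ) T) t)
    (hPinv : ∀ t ∈ Set.Icc (0 : ℝ) T, ∀ i, IsUnit (calN D R (P t) i))
    (hCDRE : ∀ t ∈ Set.Icc (0 : ℝ) T, ∀ i,
      P' t i + calM A C Q pi (P t) i
        - calL B D C S (P t) i * (calN D R (P t) i)⁻¹ * (calL B D C S (P t) i)ᵀ = 0)
    -- the feedback gains
    (Θ : Fin L → Matrix (Fin m) (Fin n) ℝ)
    (hΘ : ∀ i, Θ i = -((calN D R Pinf i)⁻¹ * (calL B D C S Pinf i)ᵀ))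
    (Θt : ℝ → Fin L → Matrix (Fin m) (Fin n) ℝ)
    (hΘt : ∀ t i, Θt t i = -((calN D R (P t) i)⁻¹ * (calL B D C S (P t) i)ᵀ)) :
    -- conclusion: the derivative of `Σ(t,i) = P∞(i) − P_T(t,i)` satisfies the stated
    -- Lyapunov-type equation
    ∀ t ∈ Set.Icc (0 : ℝ) T, ∀ i, ∀ a b : Fin n,
      HasDerivWithinAt (fun s => (Pinf i - P s i) a b)
        ((-((Pinf i - P t i) * (A i + B i * Θ i))
          - (A i + B i * Θ i)ᵀ * (Pinf i - P t i)
          - (∑ j, pi i j • (Pinf j - P t j))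
          - (C i + D i * Θ i)ᵀ * (Pinf i - P t i) * (C i + D i * Θ i)
          - (Θ i - Θt t i)ᵀ * calN D R (P t) i * (Θ i - Θt t i)) a b)
        (Set.Icc (0 : ℝ) T) t :=
  sigma_derivative_equation_general n m L T A C B D Q S R hR pi Pinf hPinfsymm hPinfinv hCARE P P'
    hPsymm hPderiv hPinv hCDRE Θ hΘ Θt hΘt
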